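/- arXiv:2001.04627 — 2 statements merged into one kernel-verified Lean document; each statement's English description precedes it below -/
import Mathlib

section
/- The variance of the count sketch inner product estimator satisfies Var_{h,s}(⟨Pψ, Pψ'⟩) ≤ (1/d')(⟨ψ,ψ'⟩² + ‖ψ‖₂² ‖ψ'‖₂²) for any fixed ψ, ψ' ∈ R^d. -/
open Finset

def sketchMatrix {d d' : ℕ} (h : Fin d → Fin d') (s : Fin d → Bool) :
    Matrix (Fin d') (Fin d) ℝ :=
  fun i j => if h j = i then (if s j then 1 else -1) else 0

/-- Count sketch inner-product estimator for given randomness. -/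
def sketchEst {d d' : ℕ} (ψ ψ' : Fin d → ℝ) (h : Fin d → Fin d') (s : Fin d → Bool) : ℝ :=
  ∑ i, (sketchMatrix h s).mulVec ψ i * (sketchMatrix h s).mulVec ψ' i

namespace CS
variable {d d' : ℕ}

def sg (b : Bool) : ℝ := if b then 1 else -1

lemma sg_mul_self (b : Bool) : sg b * sg b = 1 := by cases b <;> simp [sg]
lemma sg_not (b : Bool) : sg (!b) = - sg b := by cases b <;> simp [sg]

def flip (i₀ : Fin d) (s : Fin d → Bool) : Fin d → Bool := Function.update s i₀ (!(s i₀))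

lemma flip_apply_self (i₀ : Fin d) (s : Fin d → Bool) : flip i₀ s i₀ = !(s i₀) := by
  simp [flip]
lemma flip_apply_ne {i i₀ : Fin d} (h : i ≠ i₀) (s : Fin d → Bool) : flip i₀ s i = s i := by
  simp [flip, Function.update_of_ne h]

lemma flip_invol (i₀ : Fin d) : Function.Involutive (flip i₀) := by
  intro s; funext i
  by_cases h : i = i₀
  · subst h; simp [flip]
  · simp [flip_apply_ne h]

lemma sum_flip_neg (i₀ : Fin d) (F : (Fin d → Bool) → ℝ)
    (hF : ∀ s, F (flip i₀ s) = - F s) : ∑ s : Fin d → Bool, F s = 0 := by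
  have hb : Function.Bijective (flip i₀) := (flip_invol i₀).bijective
  have h1 : ∑ s : Fin d → Bool, F (flip i₀ s) = ∑ s : Fin d → Bool, F s :=
    Function.Bijective.sum_comp hb F
  have h2 : ∑ s : Fin d → Bool, F (flip i₀ s) = -∑ s : Fin d → Bool, F s := by
    simp [hF]
  linarith

lemma s2 {j k : Fin d} (hjk : j ≠ k) :
    ∑ s : Fin d → Bool, sg (s j) * sg (s k) = 0 := by
  apply sum_flip_neg j
  intro s
  rw [flip_apply_self, flip_apply_ne (Ne.symm hjk), sg_not]
  ring

lemma s4 (j k l m : Fin d) (hjk : j ≠ k) (hlm : l ≠ m) :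
    ∑ s : Fin d → Bool, sg (s j) * sg (s k) * sg (s l) * sg (s m) =
      if (l = j ∧ m = k) ∨ (l = k ∧ m = j) then ((2:ℝ) ^ d) else 0 := by
  by_cases hc : (l = j ∧ m = k) ∨ (l = k ∧ m = j)
  · rw [if_pos hc]
    rcases hc with ⟨rfl, rfl⟩ | ⟨rfl, rfl⟩
    · have : ∀ s : Fin d → Bool, sg (s l) * sg (s m) * sg (s l) * sg (s m) = 1 := by
        intro s
        have h1 := sg_mul_self (s l); have h2 := sg_mul_self (s m); nlinarith
      simp only [this]
      simp [card_univ]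
    · have : ∀ s : Fin d → Bool, sg (s m) * sg (s l) * sg (s l) * sg (s m) = 1 := by
        intro s
        have h1 := sg_mul_self (s l); have h2 := sg_mul_self (s m); nlinarith
      simp only [this]
      simp [card_univ]
  · rw [if_neg hc]
    push_neg at hc
    by_cases hl : l ≠ j ∧ l ≠ k
    · apply sum_flip_neg l
      intro s
      rw [flip_apply_ne (Ne.symm hl.1), flip_apply_ne (Ne.symm hl.2),
        flip_apply_self, flip_apply_ne (Ne.symm hlm) , sg_not]
      ring
    · -- l = j or l = k; m ∉ {j,k,l}
      have hm : m ≠ j ∧ m ≠ k := by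
        push_neg at hl
        rcases Classical.em (l = j) with rfl | h
        · exact ⟨Ne.symm hlm, fun hmk => (hc.1 rfl hmk)⟩
        · have hlk : l = k := hl h
          subst hlk
          exact ⟨fun hmj => (hc.2 rfl hmj), Ne.symm hlm⟩
      apply sum_flip_neg m
      intro s
      rw [flip_apply_ne (Ne.symm hm.1), flip_apply_ne (Ne.symm hm.2),
        flip_apply_ne hlm, flip_apply_self, sg_not]
      ring

lemma hcount {j k : Fin d} (hjk : j ≠ k) :
    (d' : ℝ) * ∑ h : Fin d → Fin d', (if h j = h k then (1:ℝ) else 0) = (d' : ℝ) ^ d := by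
  have hd2 : 2 ≤ d := by
    have h1 := j.isLt; have h2 := k.isLt
    have h3 : j.val ≠ k.val := fun hv => hjk (Fin.ext hv)
    omega
  -- rewrite indicator as sum over v
  have key : ∀ h : Fin d → Fin d', (if h j = h k then (1:ℝ) else 0) =
      ∑ v : Fin d', (if h j = v then (1:ℝ) else 0) * (if h k = v then (1:ℝ) else 0) := by
    intro h
    by_cases he : h j = h k
    · rw [if_pos he]
      rw [Finset.sum_eq_single (h j)]
      · simp [he]
      · intro v _ hv; simp [Ne.symm hv, fun hh : h j = v => hv hh.symm]
      · simp
    · rw [if_neg he]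
      symm
      apply Finset.sum_eq_zero
      intro v _
      by_cases h1 : h j = v
      · subst h1; simp only [if_pos rfl, one_mul]; rw [if_neg (fun hh : h k = h j => he hh.symm)]; simp
      · simp [h1]
  simp only [key]
  rw [Finset.sum_comm]
  -- for each v compute inner sum by factorization
  have inner : ∀ v : Fin d',
      ∑ h : Fin d → Fin d', (if h j = v then (1:ℝ) else 0) * (if h k = v then (1:ℝ) else 0)
        = (d' : ℝ) ^ (d - 2) := by
    intro v
    set g : Fin d → Fin d' → ℝ := fun i x => if i = j ∨ i = k then (if x = v then 1 else 0) else 1 with hg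
    have hprod : ∀ h : Fin d → Fin d',
        (if h j = v then (1:ℝ) else 0) * (if h k = v then (1:ℝ) else 0) = ∏ i : Fin d, g i (h i) := by
      intro h
      rw [← Finset.mul_prod_erase univ (fun i => g i (h i)) (Finset.mem_univ j)]
      have hk' : k ∈ univ.erase j := Finset.mem_erase.mpr ⟨Ne.symm hjk, Finset.mem_univ k⟩
      rw [← Finset.mul_prod_erase _ (fun i => g i (h i)) hk']
      have hrest : ∏ i ∈ (univ.erase j).erase k, g i (h i) = 1 := by
        apply Finset.prod_eq_one
        intro i hi
        simp only [Finset.mem_erase] at hi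
        simp [hg, hi.1, hi.2.1]
      rw [hrest, mul_one, hg]
      simp [hjk]
    simp only [hprod]
    have := Finset.prod_univ_sum (fun _ : Fin d => (univ : Finset (Fin d'))) g
    rw [Fintype.piFinset_univ] at this
    rw [← this]
    have hval : ∀ i : Fin d, ∑ x : Fin d', g i x = if i = j ∨ i = k then 1 else (d' : ℝ) := by
      intro i
      by_cases hi : i = j ∨ i = k
      · simp [g, hi]
      · simp [g, hi]
    simp only [hval]
    rw [Finset.prod_ite]
    have hfilt : (univ.filter (fun i : Fin d => i = j ∨ i = k)).card = 2 := by
      have : univ.filter (fun i : Fin d => i = j ∨ i = k) = {j, k} := by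
        ext i; simp [Finset.mem_insert]
      rw [this, Finset.card_insert_of_notMem (by simp [hjk]), Finset.card_singleton]
    have hfilt2 : (univ.filter (fun i : Fin d => ¬(i = j ∨ i = k))).card = d - 2 := by
      have htot := Finset.card_filter_add_card_filter_not
        (s := (univ : Finset (Fin d))) (p := fun i : Fin d => i = j ∨ i = k)
      rw [Finset.card_univ, Fintype.card_fin, hfilt] at htot
      omega
    rw [Finset.prod_const, Finset.prod_const, hfilt2]
    simp
  simp only [inner]
  rw [Finset.sum_const, Finset.card_univ, Fintype.card_fin, nsmul_eq_mul]
  have h2 : (d':ℝ) ^ d = (d':ℝ) ^ 2 * (d':ℝ) ^ (d - 2) := by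
    rw [← pow_add]; congr 1; omega
  rw [h2]; ring

lemma est_expand (ψ ψ' : Fin d → ℝ) (h : Fin d → Fin d') (s : Fin d → Bool) :
    sketchEst ψ ψ' h s =
      ∑ j, ∑ k, ψ j * ψ' k * sg (s j) * sg (s k) * (if h j = h k then 1 else 0) := by
  unfold sketchEst Matrix.mulVec sketchMatrix
  simp only [dotProduct]
  have step : ∀ i : Fin d',
      (∑ j, (if h j = i then (if s j then (1:ℝ) else -1) else 0) * ψ j) *
      (∑ k, (if h k = i then (if s k then (1:ℝ) else -1) else 0) * ψ' k) =
      ∑ j, ∑ k, ((if h j = i then (if s j then (1:ℝ) else -1) else 0) * ψ j) *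
        ((if h k = i then (if s k then (1:ℝ) else -1) else 0) * ψ' k) := fun i =>
    Finset.sum_mul_sum _ _ _ _
  simp only [step]
  rw [Finset.sum_comm]
  apply Finset.sum_congr rfl
  intro j _
  rw [Finset.sum_comm]
  apply Finset.sum_congr rfl
  intro k _
  rw [Finset.sum_eq_single (h j)]
  · by_cases he : h k = h j
    · rw [if_pos rfl, if_pos he, if_pos he.symm]
      cases hsj : s j <;> cases hsk : s k <;> simp [sg] <;> ring
    · rw [if_pos rfl, if_neg he, if_neg (fun hh : h j = h k => he hh.symm)]
      ring
  · intro i _ hi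
    rw [if_neg (fun hh : h j = i => hi hh.symm)]
    ring
  · simp

def offd (ψ ψ' : Fin d → ℝ) (h : Fin d → Fin d') (s : Fin d → Bool) : ℝ :=
  ∑ j, ∑ k, if j = k then 0 else
    ψ j * ψ' k * sg (s j) * sg (s k) * (if h j = h k then 1 else 0)

lemma est_split (ψ ψ' : Fin d → ℝ) (h : Fin d → Fin d') (s : Fin d → Bool) :
    sketchEst ψ ψ' h s = (∑ j, ψ j * ψ' j) + offd ψ ψ' h s := by
  rw [est_expand]
  unfold offd
  rw [← Finset.sum_add_distrib]
  apply Finset.sum_congr rfl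
  intro j _
  have : ∀ k, ψ j * ψ' k * sg (s j) * sg (s k) * (if h j = h k then 1 else 0)
      = (if j = k then ψ j * ψ' j else 0) +
        (if j = k then 0 else ψ j * ψ' k * sg (s j) * sg (s k) * (if h j = h k then 1 else 0)) := by
    intro k
    by_cases hj : j = k
    · subst hj
      rw [if_pos rfl, if_pos rfl, if_pos rfl, add_zero]
      have h1 : ψ j * ψ' j * sg (s j) * sg (s j) * 1
          = ψ j * ψ' j * (sg (s j) * sg (s j)) := by ring
      rw [h1, sg_mul_self, mul_one]
    · rw [if_neg hj, if_neg hj, zero_add]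
  calc ∑ k, ψ j * ψ' k * sg (s j) * sg (s k) * (if h j = h k then 1 else 0)
      = ∑ k, ((if j = k then ψ j * ψ' j else 0) +
        (if j = k then 0 else ψ j * ψ' k * sg (s j) * sg (s k) * (if h j = h k then 1 else 0))) :=
        Finset.sum_congr rfl (fun k _ => this k)
    _ = _ := by rw [Finset.sum_add_distrib, Finset.sum_ite_eq]; simp

lemma sum_offd_s (ψ ψ' : Fin d → ℝ) (h : Fin d → Fin d') :
    ∑ s : Fin d → Bool, offd ψ ψ' h s = 0 := by
  unfold offd
  rw [Finset.sum_comm]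
  apply Finset.sum_eq_zero
  intro j _
  rw [Finset.sum_comm]
  apply Finset.sum_eq_zero
  intro k _
  by_cases hjk : j = k
  · simp [hjk]
  · have : ∀ s : Fin d → Bool,
        (if j = k then (0:ℝ) else ψ j * ψ' k * sg (s j) * sg (s k) * (if h j = h k then 1 else 0))
        = (ψ j * ψ' k * (if h j = h k then 1 else 0)) * (sg (s j) * sg (s k)) := by
      intro s; rw [if_neg hjk]; ring
    simp only [this]
    rw [← Finset.mul_sum, s2 hjk, mul_zero]

lemma sum_offd_sq (ψ ψ' : Fin d → ℝ) (hd' : 0 < d') :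
    ∑ h : Fin d → Fin d', ∑ s : Fin d → Bool, (offd ψ ψ' h s) ^ 2
      = (2:ℝ) ^ d * ((d':ℝ) ^ d / d') *
        (∑ j, ∑ k, if j = k then 0 else
          (ψ j * ψ' k) ^ 2 + (ψ j * ψ' k) * (ψ k * ψ' j)) := by
  set c : Fin d → Fin d → ℝ := fun j k => ψ j * ψ' k with hc
  -- rewrite offd as sum over pairs
  have hoffd : ∀ (h : Fin d → Fin d') (s : Fin d → Bool), offd ψ ψ' h s =
      ∑ p : Fin d × Fin d, (if p.1 = p.2 then 0 else
        c p.1 p.2 * sg (s p.1) * sg (s p.2) * (if h p.1 = h p.2 then 1 else 0)) := by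
    intro h s
    rw [Fintype.sum_prod_type]
    rfl
  -- inner: for fixed h, p, sum over q and s
  have key : ∀ (h : Fin d → Fin d') (p : Fin d × Fin d),
      ∑ q : Fin d × Fin d, ∑ s : Fin d → Bool,
        (if p.1 = p.2 then (0:ℝ) else
          c p.1 p.2 * sg (s p.1) * sg (s p.2) * (if h p.1 = h p.2 then 1 else 0)) *
        (if q.1 = q.2 then (0:ℝ) else
          c q.1 q.2 * sg (s q.1) * sg (s q.2) * (if h q.1 = h q.2 then 1 else 0))
      = (if p.1 = p.2 then 0 else
          (c p.1 p.2 ^ 2 + c p.1 p.2 * c p.2 p.1) * (if h p.1 = h p.2 then 1 else 0))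
          * (2:ℝ) ^ d := by
    intro h p
    by_cases hp : p.1 = p.2
    · simp [hp]
    · simp only [if_neg hp]
      have hq : ∀ q : Fin d × Fin d,
          ∑ s : Fin d → Bool,
            (c p.1 p.2 * sg (s p.1) * sg (s p.2) * (if h p.1 = h p.2 then (1:ℝ) else 0)) *
            (if q.1 = q.2 then (0:ℝ) else
              c q.1 q.2 * sg (s q.1) * sg (s q.2) * (if h q.1 = h q.2 then 1 else 0))
          = (if q = (p.1, p.2) then
                c p.1 p.2 ^ 2 * (if h p.1 = h p.2 then (1:ℝ) else 0) * (2:ℝ)^d else 0)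
            + (if q = (p.2, p.1) then
                c p.1 p.2 * c p.2 p.1 * (if h p.1 = h p.2 then (1:ℝ) else 0) * (2:ℝ)^d else 0) := by
        rintro ⟨l, m⟩
        simp only []
        by_cases hqd : l = m
        · have h1 : ((l, m) : Fin d × Fin d) ≠ (p.1, p.2) := by
            intro hh
            rw [Prod.mk.injEq] at hh
            exact hp (by rw [← hh.1, ← hh.2, hqd])
          have h2 : ((l, m) : Fin d × Fin d) ≠ (p.2, p.1) := by
            intro hh
            rw [Prod.mk.injEq] at hh
            exact hp (by rw [← hh.1, ← hh.2, hqd])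
          have hz : ∀ s : Fin d → Bool,
              (c p.1 p.2 * sg (s p.1) * sg (s p.2) * (if h p.1 = h p.2 then (1:ℝ) else 0)) *
              (if l = m then (0:ℝ) else
                c l m * sg (s l) * sg (s m) * (if h l = h m then 1 else 0)) = 0 := by
            intro s; rw [if_pos hqd, mul_zero]
          simp only [hz]
          rw [Finset.sum_const_zero, if_neg h1, if_neg h2, add_zero]
        · have step : ∀ s : Fin d → Bool,
              (c p.1 p.2 * sg (s p.1) * sg (s p.2) * (if h p.1 = h p.2 then (1:ℝ) else 0)) *
              (if l = m then (0:ℝ) else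
                c l m * sg (s l) * sg (s m) * (if h l = h m then 1 else 0))
              = (c p.1 p.2 * c l m * (if h p.1 = h p.2 then (1:ℝ) else 0) *
                  (if h l = h m then (1:ℝ) else 0)) *
                (sg (s p.1) * sg (s p.2) * sg (s l) * sg (s m)) := by
            intro s; rw [if_neg hqd]; ring
          simp only [step]
          rw [← Finset.mul_sum, s4 p.1 p.2 l m hp hqd]
          by_cases hc1 : l = p.1 ∧ m = p.2
          · rw [hc1.1, hc1.2]
            have hq1 : ((p.1, p.2) : Fin d × Fin d) = (p.1, p.2) := rfl
            have hq2 : ((p.1, p.2) : Fin d × Fin d) ≠ (p.2, p.1) := by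
              intro hh
              rw [Prod.mk.injEq] at hh
              exact hp hh.1
            rw [if_pos (Or.inl ⟨rfl, rfl⟩), if_pos hq1, if_neg hq2, add_zero]
            have hII : (if h p.1 = h p.2 then (1:ℝ) else 0) * (if h p.1 = h p.2 then (1:ℝ) else 0)
                = (if h p.1 = h p.2 then (1:ℝ) else 0) := by
              by_cases hE : h p.1 = h p.2 <;> simp [hE]
            calc c p.1 p.2 * c p.1 p.2 * (if h p.1 = h p.2 then (1:ℝ) else 0) *
                  (if h p.1 = h p.2 then (1:ℝ) else 0) * 2^d
                = c p.1 p.2 * c p.1 p.2 *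
                    ((if h p.1 = h p.2 then (1:ℝ) else 0) * (if h p.1 = h p.2 then (1:ℝ) else 0))
                    * 2^d := by ring
              _ = _ := by rw [hII]; ring
          · by_cases hc2 : l = p.2 ∧ m = p.1
            · rw [hc2.1, hc2.2]
              have hq1 : ((p.2, p.1) : Fin d × Fin d) ≠ (p.1, p.2) := by
                intro hh
                rw [Prod.mk.injEq] at hh
                exact hp hh.1.symm
              rw [if_pos (Or.inr ⟨rfl, rfl⟩), if_neg hq1, if_pos rfl, zero_add]
              have hII : (if h p.1 = h p.2 then (1:ℝ) else 0) * (if h p.2 = h p.1 then (1:ℝ) else 0)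
                  = (if h p.1 = h p.2 then (1:ℝ) else 0) := by
                by_cases hE : h p.1 = h p.2
                · rw [if_pos hE, if_pos hE.symm, mul_one]
                · rw [if_neg hE, zero_mul]
              calc c p.1 p.2 * c p.2 p.1 * (if h p.1 = h p.2 then (1:ℝ) else 0) *
                    (if h p.2 = h p.1 then (1:ℝ) else 0) * 2^d
                  = c p.1 p.2 * c p.2 p.1 *
                      ((if h p.1 = h p.2 then (1:ℝ) else 0) * (if h p.2 = h p.1 then (1:ℝ) else 0))
                      * 2^d := by ring
                _ = _ := by rw [hII]
            · have hcond : ¬((l = p.1 ∧ m = p.2) ∨ (l = p.2 ∧ m = p.1)) := by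
                rintro (h1 | h2)
                · exact hc1 h1
                · exact hc2 h2
              have hq1 : ((l, m) : Fin d × Fin d) ≠ (p.1, p.2) := by
                intro hh
                rw [Prod.mk.injEq] at hh
                exact hc1 hh
              have hq2 : ((l, m) : Fin d × Fin d) ≠ (p.2, p.1) := by
                intro hh
                rw [Prod.mk.injEq] at hh
                exact hc2 hh
              rw [if_neg hcond, if_neg hq1, if_neg hq2, mul_zero, add_zero]
      -- sum hq over q
      rw [Finset.sum_congr rfl (fun q _ => hq q)]
      rw [Finset.sum_add_distrib, Finset.sum_ite_eq' univ ((p.1, p.2) : Fin d × Fin d),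
        Finset.sum_ite_eq' univ ((p.2, p.1) : Fin d × Fin d)]
      rw [if_pos (Finset.mem_univ _), if_pos (Finset.mem_univ _)]
      ring
  -- assemble
  have main : ∀ h : Fin d → Fin d', ∑ s : Fin d → Bool, (offd ψ ψ' h s) ^ 2
      = ∑ p : Fin d × Fin d, (if p.1 = p.2 then 0 else
          (c p.1 p.2 ^ 2 + c p.1 p.2 * c p.2 p.1) * (if h p.1 = h p.2 then 1 else 0))
          * (2:ℝ) ^ d := by
    intro h
    have expand : ∀ s : Fin d → Bool, (offd ψ ψ' h s)^2 =
        ∑ p : Fin d × Fin d, ∑ q : Fin d × Fin d,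
          (if p.1 = p.2 then (0:ℝ) else
            c p.1 p.2 * sg (s p.1) * sg (s p.2) * (if h p.1 = h p.2 then 1 else 0)) *
          (if q.1 = q.2 then (0:ℝ) else
            c q.1 q.2 * sg (s q.1) * sg (s q.2) * (if h q.1 = h q.2 then 1 else 0)) := by
      intro s
      rw [hoffd, sq, Finset.sum_mul_sum]
    simp only [expand]
    rw [Finset.sum_comm]
    apply Finset.sum_congr rfl
    intro p _
    rw [Finset.sum_comm]
    exact key h p
  simp only [main]
  -- swap h and p sums and use hcount
  rw [Finset.sum_comm]
  have hfin : ∀ p : Fin d × Fin d,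
      ∑ h : Fin d → Fin d', (if p.1 = p.2 then (0:ℝ) else
          (c p.1 p.2 ^ 2 + c p.1 p.2 * c p.2 p.1) * (if h p.1 = h p.2 then 1 else 0))
          * (2:ℝ) ^ d
      = (2:ℝ)^d * ((d':ℝ)^d / d') *
          (if p.1 = p.2 then 0 else c p.1 p.2 ^ 2 + c p.1 p.2 * c p.2 p.1) := by
    intro p
    by_cases hp : p.1 = p.2
    · simp [hp]
    · simp only [if_neg hp]
      have : ∀ h : Fin d → Fin d',
          (c p.1 p.2 ^ 2 + c p.1 p.2 * c p.2 p.1) * (if h p.1 = h p.2 then (1:ℝ) else 0) * 2^d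
          = ((c p.1 p.2 ^ 2 + c p.1 p.2 * c p.2 p.1) * 2^d) * (if h p.1 = h p.2 then (1:ℝ) else 0) := by
        intro h; ring
      simp only [this]
      rw [← Finset.mul_sum]
      have hsum : ∑ h : Fin d → Fin d', (if h p.1 = h p.2 then (1:ℝ) else 0) = (d':ℝ)^d / d' := by
        have hcc := hcount (d' := d') hp
        have hne : (d' : ℝ) ≠ 0 := by positivity
        rw [eq_div_iff hne]
        linarith
      rw [hsum]
      ring
  simp only [hfin]
  rw [← Finset.mul_sum, Fintype.sum_prod_type]

end CS

open CS

theorem count_sketch_variance_bound (d d' : ℕ) (hd' : 0 < d') (ψ ψ' : Fin d → ℝ) :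
    (∑ h : Fin d → Fin d', ∑ s : Fin d → Bool, (sketchEst ψ ψ' h s) ^ 2)
        / ((d' ^ d : ℝ) * (2 ^ d : ℝ))
      - ((∑ h : Fin d → Fin d', ∑ s : Fin d → Bool, sketchEst ψ ψ' h s)
        / ((d' ^ d : ℝ) * (2 ^ d : ℝ))) ^ 2
      ≤ (1 / (d' : ℝ)) *
        ((∑ j, ψ j * ψ' j) ^ 2 + (∑ j, ψ j ^ 2) * (∑ j, ψ' j ^ 2)) := by
  have hd'R : (0:ℝ) < (d':ℝ) := by exact_mod_cast hd'
  set A : ℝ := ∑ j, ψ j * ψ' j with hA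
  set B : ℝ := ∑ j, ∑ k, if j = k then 0 else
      (ψ j * ψ' k) ^ 2 + (ψ j * ψ' k) * (ψ k * ψ' j) with hB
  have cardS : (Finset.univ : Finset (Fin d → Bool)).card = 2 ^ d := by
    simp [Finset.card_univ]
  have cardH : (Finset.univ : Finset (Fin d → Fin d')).card = d' ^ d := by
    simp [Finset.card_univ]
  -- mean
  have hmean : (∑ h : Fin d → Fin d', ∑ s : Fin d → Bool, sketchEst ψ ψ' h s)
      = ((d':ℝ) ^ d * 2 ^ d) * A := by
    have hs : ∀ h : Fin d → Fin d', ∑ s : Fin d → Bool, sketchEst ψ ψ' h s = (2:ℝ)^d * A := by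
      intro h
      simp only [est_split ψ ψ' h]
      rw [Finset.sum_add_distrib, sum_offd_s, add_zero, Finset.sum_const, cardS,
        nsmul_eq_mul]
      push_cast
      ring
    simp only [hs]
    rw [Finset.sum_const, cardH, nsmul_eq_mul]
    push_cast
    ring
  -- second moment
  have hsq : (∑ h : Fin d → Fin d', ∑ s : Fin d → Bool, (sketchEst ψ ψ' h s) ^ 2)
      = ((d':ℝ) ^ d * 2 ^ d) * A ^ 2 + (2:ℝ)^d * ((d':ℝ)^d / d') * B := by
    have hptw : ∀ (h : Fin d → Fin d') (s : Fin d → Bool),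
        (sketchEst ψ ψ' h s)^2 = A^2 + 2*A*offd ψ ψ' h s + (offd ψ ψ' h s)^2 := by
      intro h s; rw [est_split ψ ψ' h s]; ring
    simp only [hptw]
    have hs : ∀ h : Fin d → Fin d',
        ∑ s : Fin d → Bool, (A^2 + 2*A*offd ψ ψ' h s + (offd ψ ψ' h s)^2)
        = (2:ℝ)^d * A^2 + ∑ s : Fin d → Bool, (offd ψ ψ' h s)^2 := by
      intro h
      rw [Finset.sum_add_distrib, Finset.sum_add_distrib, ← Finset.mul_sum, sum_offd_s,
        mul_zero, add_zero, Finset.sum_const, cardS, nsmul_eq_mul]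
      push_cast
      ring
    simp only [hs]
    rw [Finset.sum_add_distrib, Finset.sum_const, cardH, nsmul_eq_mul, sum_offd_sq ψ ψ' hd']
    push_cast
    ring
  rw [hmean, hsq]
  have hNd : (0:ℝ) < (d':ℝ)^d := by positivity
  have h2d : (0:ℝ) < (2:ℝ)^d := by positivity
  have lhs_eq : (((d':ℝ) ^ d * 2 ^ d) * A ^ 2 + (2:ℝ)^d * ((d':ℝ)^d / d') * B)
        / ((d' ^ d : ℝ) * (2 ^ d : ℝ))
      - ((((d':ℝ) ^ d * 2 ^ d) * A) / ((d' ^ d : ℝ) * (2 ^ d : ℝ))) ^ 2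
      = B / d' := by
    field_simp
    ring
  rw [lhs_eq]
  -- bound B
  have e1 : A^2 = ∑ j, ∑ k, (ψ j * ψ' j) * (ψ k * ψ' k) := by
    rw [sq, hA, Finset.sum_mul_sum]
  have e2 : (∑ j, ψ j ^ 2) * (∑ j, ψ' j ^ 2) = ∑ j, ∑ k, ψ j ^ 2 * ψ' k ^ 2 :=
    Finset.sum_mul_sum _ _ _ _
  have hBle : B ≤ A^2 + (∑ j, ψ j ^ 2) * (∑ j, ψ' j ^ 2) := by
    rw [e1, e2, ← Finset.sum_add_distrib, hB]
    apply Finset.sum_le_sum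
    intro j _
    rw [← Finset.sum_add_distrib]
    apply Finset.sum_le_sum
    intro k _
    by_cases hj : j = k
    · rw [if_pos hj]
      subst hj
      nlinarith [sq_nonneg (ψ j * ψ' j)]
    · rw [if_neg hj]
      apply le_of_eq
      ring
  rw [div_eq_mul_inv, ← one_div]
  calc B * (1 / (d':ℝ)) ≤ (A^2 + (∑ j, ψ j ^ 2) * (∑ j, ψ' j ^ 2)) * (1 / (d':ℝ)) := by
        apply mul_le_mul_of_nonneg_right hBle
        positivity
    _ = (1 / (d':ℝ)) * (A^2 + (∑ j, ψ j ^ 2) * (∑ j, ψ' j ^ 2)) := by ring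
end

section
/- The scalar SigmE function g(ψ) = 2/(1 + exp(-η'ψ/(|ψ| + ε'))) - 1 is differentiable at every ψ ∈ R, including ψ = 0, with derivative at 0 equal to η'/(2ε'). -/
/-! The difference quotient of ψ ↦ ψ / (|ψ| + ε') at 0 is 1 / (|ψ| + ε'), which tends to 1 / ε';
away from 0 the absolute value is smooth. Composing with t ↦ 2 / (1 + exp (-t)) - 1, whose
derivative at 0 is 1 / 2, gives η' / (2 ε'). -/

open Real

lemma hasDerivAt_div_abs_add_const_zero {ε : ℝ} (hε : ε ≠ 0) :
    HasDerivAt (fun x : ℝ => x / (|x| + ε)) ε⁻¹ 0 := by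
  rw [hasDerivAt_iff_tendsto_slope]
  have hslope : ∀ x ≠ (0 : ℝ), slope (fun x : ℝ => x / (|x| + ε)) 0 x = (|x| + ε)⁻¹ := by
    intro x hx
    rw [slope_def_field]
    field_simp
    simp
  have hcont : ContinuousAt (fun x : ℝ => (|x| + ε)⁻¹) 0 :=
    (continuous_abs.continuousAt.add continuousAt_const).inv₀ (by simpa using hε)
  refine (by simpa using hcont.continuousWithinAt.tendsto : Filter.Tendsto _ _ (nhds ε⁻¹)).congr' ?_
  filter_upwards [self_mem_nhdsWithin] with x hx
  exact (hslope x hx).symm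

lemma differentiableAt_div_abs_add_const {ε : ℝ} (hε : 0 < ε) (x : ℝ) :
    DifferentiableAt ℝ (fun x : ℝ => x / (|x| + ε)) x := by
  rcases eq_or_ne x 0 with rfl | hx
  · exact (hasDerivAt_div_abs_add_const_zero hε.ne').differentiableAt
  · exact differentiableAt_id.div ((hasDerivAt_abs hx).differentiableAt.add_const ε)
      (by positivity)

lemma hasDerivAt_two_div_one_add_exp_neg_sub_one (t : ℝ) :
    HasDerivAt (fun t : ℝ => 2 / (1 + exp (-t)) - 1) (2 * exp (-t) / (1 + exp (-t)) ^ 2) t := by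
  refine (((hasDerivAt_const t 2).div ((hasDerivAt_neg t).exp.const_add 1)
    (by positivity)).sub_const 1).congr_deriv ?_
  ring

theorem sigmE_differentiable_general (η' ε' : ℝ) (hε : 0 < ε') :
    let g : ℝ → ℝ := fun ψ => 2 / (1 + Real.exp (-η' * ψ / (|ψ| + ε'))) - 1
    (∀ ψ : ℝ, DifferentiableAt ℝ g ψ) ∧ deriv g 0 = η' / (2 * ε') := by
  intro g
  have hg : g = (fun t : ℝ => 2 / (1 + exp (-t)) - 1) ∘ fun ψ => η' * (ψ / (|ψ| + ε')) := by
    funext ψ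
    simp only [g, Function.comp, neg_mul, neg_div, mul_div_assoc]
  have hinner : HasDerivAt (fun ψ : ℝ => η' * (ψ / (|ψ| + ε'))) (η' * ε'⁻¹) 0 :=
    (hasDerivAt_div_abs_add_const_zero hε.ne').const_mul η'
  refine ⟨fun ψ => ?_, ?_⟩
  · rw [hg]
    exact (hasDerivAt_two_div_one_add_exp_neg_sub_one _).differentiableAt.comp ψ
      ((differentiableAt_div_abs_add_const hε ψ).const_mul η')
  · rw [hg, ((hasDerivAt_two_div_one_add_exp_neg_sub_one 0).comp_of_eq 0 hinner (by simp)).deriv]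
    field_simp
    norm_num

theorem sigmE_differentiable (η' ε' : ℝ) (hη : 0 < η') (hε : 0 < ε') :
    let g : ℝ → ℝ := fun ψ => 2 / (1 + Real.exp (-η' * ψ / (|ψ| + ε'))) - 1
    (∀ ψ : ℝ, DifferentiableAt ℝ g ψ) ∧ deriv g 0 = η' / (2 * ε') :=
  sigmE_differentiable_general η' ε' hε
end
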